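/- Let X ∈ ℝ^{n×N} be self-decomposable with n ≥ 1 and N ≥ 2. Then T(ξ(X)) ≤ N/2, where T(α) = (1/2)(1 + 1/α). -/
import Mathlib


/-- A matrix `X ∈ ℝ^{n×N}` is self-decomposable if it has full row rank `n` and
each of its columns lies in the span of the other columns. -/
def SelfDecomposable {n N : ℕ} (X : Matrix (Fin n) (Fin N) ℝ) : Prop :=
  X.rank = n ∧ ∀ k : Fin N, ∃ γ : Fin N → ℝ, γ k = 0 ∧
    ∀ i, X i k = ∑ t : Fin N, γ t * X i t

/-- The self-decomposability amplitude `ξ(X)`. -/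
noncomputable def xi {n N : ℕ} (X : Matrix (Fin n) (Fin N) ℝ) : ℝ :=
  ⨆ k : Fin N, sInf {c : ℝ | ∃ γ : Fin N → ℝ, γ k = 0 ∧
    (∀ i, X i k = ∑ t : Fin N, γ t * X i t) ∧ c = ⨆ t : Fin N, |γ t|}

/-- `T(α) = (1/2)(1 + 1/α)`. -/
noncomputable def Tfun (α : ℝ) : ℝ := (1 / 2) * (1 + 1 / α)

lemma xi_lower {n N : ℕ} (hn : 1 ≤ n) (hN : 2 ≤ N)
    (X : Matrix (Fin n) (Fin N) ℝ) (hX : SelfDecomposable X) :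
    1 / ((N : ℝ) - 1) ≤ xi X := by
  have hNpos : (0:ℝ) < (N:ℝ) - 1 := by
    have : (2:ℝ) ≤ N := by exact_mod_cast hN
    linarith
  by_contra hcon
  push_neg at hcon
  haveI : Nonempty (Fin N) := ⟨⟨0, by omega⟩⟩
  -- for each k, pick γ with sup norm < 1/(N-1)
  have hchoice : ∀ k : Fin N, ∃ γ : Fin N → ℝ, γ k = 0 ∧
      (∀ i, X i k = ∑ t : Fin N, γ t * X i t) ∧
      (⨆ t : Fin N, |γ t|) < 1 / ((N : ℝ) - 1) := by
    intro k
    set S := {c : ℝ | ∃ γ : Fin N → ℝ, γ k = 0 ∧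
      (∀ i, X i k = ∑ t : Fin N, γ t * X i t) ∧ c = ⨆ t : Fin N, |γ t|} with hS
    have hSne : S.Nonempty := by
      obtain ⟨γ, h1, h2⟩ := hX.2 k
      exact ⟨⨆ t : Fin N, |γ t|, γ, h1, h2, rfl⟩
    have hle : sInf S ≤ xi X := by
      have hb : BddAbove (Set.range (fun k : Fin N => sInf {c : ℝ | ∃ γ : Fin N → ℝ, γ k = 0 ∧
        (∀ i, X i k = ∑ t : Fin N, γ t * X i t) ∧ c = ⨆ t : Fin N, |γ t|})) :=
        (Set.finite_range _).bddAbove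
      exact le_ciSup hb k
    have hlt : sInf S < 1 / ((N : ℝ) - 1) := lt_of_le_of_lt hle hcon
    obtain ⟨c, hcS, hclt⟩ := exists_lt_of_csInf_lt hSne hlt
    obtain ⟨γ, h1, h2, h3⟩ := hcS
    exact ⟨γ, h1, h2, by rw [← h3]; exact hclt⟩
  choose γ hγ0 hγeq hγsup using hchoice
  -- entrywise bound
  have hent : ∀ k t, |γ k t| < 1 / ((N : ℝ) - 1) := by
    intro k t
    have : |γ k t| ≤ ⨆ t : Fin N, |γ k t| :=
      le_ciSup (f := fun t => |γ k t|) ((Set.finite_range _).bddAbove) t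
    exact lt_of_le_of_lt this (hγsup k)
  -- the coefficient matrix
  set G : Matrix (Fin N) (Fin N) ℝ := Matrix.of (fun t k => γ k t) with hG
  have hXG : X * (1 - G) = 0 := by
    ext i k
    simp only [Matrix.mul_apply, Matrix.sub_apply, Matrix.one_apply, Matrix.zero_apply,
      hG, Matrix.of_apply, mul_sub]
    rw [Finset.sum_sub_distrib]
    have h1 : ∑ t : Fin N, X i t * (if t = k then (1:ℝ) else 0) = X i k := by
      simp [mul_ite]
    have h2 : ∑ t : Fin N, X i t * γ k t = X i k := by
      rw [hγeq k i]; apply Finset.sum_congr rfl; intros; ring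
    rw [h1, h2]; ring
  -- 1 - G is singular
  have hdet : (1 - G).det = 0 := by
    by_contra hdne
    have hunit : IsUnit (1 - G) := (Matrix.isUnit_iff_isUnit_det _).mpr (isUnit_iff_ne_zero.mpr hdne)
    have hX0 : X = 0 := by
      have := congrArg (· * (1 - G)⁻¹) hXG
      simpa [Matrix.mul_assoc, Matrix.mul_nonsing_inv _ ((Matrix.isUnit_iff_isUnit_det _).mp hunit)]
        using this
    have : X.rank = 0 := by rw [hX0]; exact Matrix.rank_zero
    rw [hX.1] at this; omega
  -- kernel vector of transpose
  have hdetT : Matrix.det ((1 - G).transpose) = 0 := by rw [Matrix.det_transpose]; exact hdet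
  obtain ⟨v, hv0, hvker⟩ := (Matrix.exists_mulVec_eq_zero_iff).mpr hdetT
  -- pick max coordinate
  obtain ⟨k, -, hkmax⟩ := Finset.exists_max_image Finset.univ (fun t => |v t|) ⟨Classical.arbitrary _, Finset.mem_univ _⟩
  have hvkpos : 0 < |v k| := by
    rcases Function.ne_iff.mp hv0 with ⟨j, hj⟩
    have := hkmax j (Finset.mem_univ j)
    have hj' : 0 < |v j| := abs_pos.mpr hj
    linarith
  -- The equation at k
  have hkeq : v k = ∑ t : Fin N, γ k t * v t := by
    have := congrFun hvker k
    simp only [Matrix.mulVec, dotProduct, Matrix.transpose_apply, Matrix.sub_apply,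
      Matrix.one_apply, Matrix.zero_apply, hG, Matrix.of_apply, sub_mul,
      Pi.zero_apply] at this
    rw [Finset.sum_sub_distrib] at this
    have h1 : ∑ t : Fin N, (if t = k then (1:ℝ) else 0) * v t = v k := by simp
    rw [h1] at this
    linarith
  -- bound
  have hbound : |v k| ≤ ∑ t ∈ Finset.univ.erase k, |γ k t * v t| := by
    calc |v k| = |∑ t : Fin N, γ k t * v t| := by rw [hkeq]
    _ ≤ ∑ t : Fin N, |γ k t * v t| := Finset.abs_sum_le_sum_abs _ _
    _ = ∑ t ∈ Finset.univ.erase k, |γ k t * v t| := by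
        rw [← Finset.sum_erase_add _ _ (Finset.mem_univ k)]
        simp [hγ0 k]
  have hcard : (Finset.univ.erase k).card = N - 1 := by
    rw [Finset.card_erase_of_mem (Finset.mem_univ k)]; simp
  set B := ⨆ t : Fin N, |γ k t| with hB
  have hBlt : B < 1 / ((N:ℝ) - 1) := hγsup k
  have hterm : ∀ t ∈ Finset.univ.erase k, |γ k t * v t| ≤ B * |v k| := by
    intro t _
    rw [abs_mul]
    have h1 : |γ k t| ≤ B := le_ciSup (f := fun t => |γ k t|) ((Set.finite_range _).bddAbove) t
    have h2 : |v t| ≤ |v k| := hkmax t (Finset.mem_univ t)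
    have h1' : 0 ≤ |γ k t| := abs_nonneg _
    nlinarith [abs_nonneg (v t)]
  have hsum : ∑ t ∈ Finset.univ.erase k, |γ k t * v t| ≤ ((N:ℝ) - 1) * (B * |v k|) := by
    calc ∑ t ∈ Finset.univ.erase k, |γ k t * v t|
        ≤ (Finset.univ.erase k).card • (B * |v k|) := Finset.sum_le_card_nsmul _ _ _ hterm
    _ = ((N:ℝ) - 1) * (B * |v k|) := by
        rw [hcard, nsmul_eq_mul]
        congr 1
        have : (1:ℕ) ≤ N := by omega
        push_cast [Nat.cast_sub this]
        ring
  have hfinal : ((N:ℝ) - 1) * (B * |v k|) < |v k| := by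
    have hBN : ((N:ℝ) - 1) * B < 1 := by
      have := (lt_div_iff₀ hNpos).mp (by rwa [one_div] at hBlt; )
      nlinarith
    nlinarith
  linarith

theorem statement13 {n N : ℕ} (hn : 1 ≤ n) (hN : 2 ≤ N)
    (X : Matrix (Fin n) (Fin N) ℝ) (hX : SelfDecomposable X) :
    Tfun (xi X) ≤ (N : ℝ) / 2 := by
  have hNpos : (0:ℝ) < (N:ℝ) - 1 := by
    have : (2:ℝ) ≤ N := by exact_mod_cast hN
    linarith
  have hlow := xi_lower hn hN X hX
  have hxipos : 0 < xi X := lt_of_lt_of_le (by positivity) hlow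
  have hinv : 1 / xi X ≤ (N:ℝ) - 1 := by
    have := one_div_le_one_div_of_le (by positivity) hlow
    rwa [one_div_one_div] at this
  unfold Tfun
  nlinarith
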